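/- Feedforward networks with one hidden layer of sigmoidal activations are dense in C(K) for compact K ⊂ ℝⁿ: for any continuous Δ : K → ℝ and ε > 0 there exist k, weights W ∈ ℝᵏ, θ ∈ ℝ^{k×n}, b ∈ ℝᵏ such that sup_{x∈K} |Δ(x) − Σᵢ Wᵢ σ(θᵢ·x + bᵢ)| < ε, where σ is any continuous sigmoidal function (σ(t) → 1 as t → ∞, σ(t) → 0 as t → −∞). -/

import Mathlib

open Matrix Filter

section CybenkoAux

open Finset

lemma sigma_bdd (σ : ℝ → ℝ) (hc : Continuous σ) (ht : Tendsto σ atTop (nhds 1))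
    (hb : Tendsto σ atBot (nhds 0)) : ∃ C : ℝ, 1 ≤ C ∧ ∀ u, |σ u| ≤ C := by
  obtain ⟨T₁, hT₁⟩ := (Metric.tendsto_atTop.mp ht) 1 one_pos
  obtain ⟨T₂, hT₂⟩ := eventually_atBot.mp ((Metric.tendsto_nhds.mp hb) 1 one_pos)
  obtain ⟨C₀, hC₀⟩ := (isCompact_Icc (a := min T₂ T₁) (b := max T₂ T₁)).exists_bound_of_continuousOn
    hc.continuousOn
  refine ⟨max (max C₀ 2) 1, le_max_right _ _, fun u => ?_⟩
  rcases le_or_gt u (min T₂ T₁) with h | h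
  · have := hT₂ u (h.trans (min_le_left _ _))
    rw [Real.dist_eq, sub_zero] at this
    calc |σ u| ≤ 1 := this.le
    _ ≤ _ := le_max_right _ _
  rcases le_or_gt u (max T₂ T₁) with h2 | h2
  · have := hC₀ u ⟨h.le, h2⟩
    rw [Real.norm_eq_abs] at this
    exact this.trans ((le_max_left _ _).trans (le_max_left _ _))
  · have := hT₁ u (le_of_lt (lt_of_le_of_lt (le_max_right T₂ T₁) h2))
    rw [Real.dist_eq] at this
    have : |σ u| ≤ 2 := by
      have h1 := abs_sub_abs_le_abs_sub (σ u) 1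
      simp only [abs_one] at h1
      linarith
    exact this.trans ((le_max_right _ _).trans (le_max_left _ _))

lemma sigma_tail (σ : ℝ → ℝ) (ht : Tendsto σ atTop (nhds 1))
    (hb : Tendsto σ atBot (nhds 0)) (α : ℝ) (hα : 0 < α) :
    ∃ T : ℝ, 1 ≤ T ∧ (∀ u, T ≤ u → |σ u - 1| ≤ α) ∧ (∀ u, u ≤ -T → |σ u| ≤ α) := by
  obtain ⟨T₁, hT₁⟩ := eventually_atTop.mp ((Metric.tendsto_nhds.mp ht) α hα)
  obtain ⟨T₂, hT₂⟩ := eventually_atBot.mp ((Metric.tendsto_nhds.mp hb) α hα)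
  refine ⟨max (max T₁ (-T₂)) 1, le_max_right _ _, fun u hu => ?_, fun u hu => ?_⟩
  · have := hT₁ u (le_trans ((le_max_left T₁ (-T₂)).trans (le_max_left _ _)) hu)
    rw [Real.dist_eq] at this; exact this.le
  · have h2 : u ≤ T₂ := by
      have : -T₂ ≤ max (max T₁ (-T₂)) 1 := (le_max_right T₁ (-T₂)).trans (le_max_left _ _)
      linarith
    have := hT₂ u h2
    rw [Real.dist_eq, sub_zero] at this; exact this.le

lemma oneD (σ : ℝ → ℝ) (hc : Continuous σ) (ht : Tendsto σ atTop (nhds 1))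
    (hb : Tendsto σ atBot (nhds 0)) (g : ℝ → ℝ) (hg : Continuous g)
    (M : ℝ) (hM : 1 ≤ M) (ε : ℝ) (hε : 0 < ε) :
    ∃ (k : ℕ) (w lam c : Fin k → ℝ),
      ∀ t ∈ Set.Icc (-M) M, |g t - ∑ j, w j * σ (lam j * t + c j)| < ε := by
  obtain ⟨C, hC1, hC⟩ := sigma_bdd σ hc ht hb
  have hCpos : (0:ℝ) < 1 + C := by linarith
  set ε₁ : ℝ := ε / (10 * (1 + C)) with hε₁def
  have hε₁ : 0 < ε₁ := by positivity
  -- uniform continuity on a compact interval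
  obtain ⟨δ, hδ, hunif⟩ := Metric.uniformContinuousOn_iff_le.mp
    ((isCompact_Icc (a := -M) (b := M)).uniformContinuousOn_of_continuous hg.continuousOn) ε₁ hε₁
  obtain ⟨N, hN0, hNgt⟩ : ∃ N : ℕ, 0 < N ∧ 2 * M / δ < N := by
    refine ⟨⌈2 * M / δ⌉₊ + 1, Nat.succ_pos _, ?_⟩
    have := Nat.le_ceil (2 * M / δ)
    push_cast
    linarith
  have hNpos : 0 < (N:ℝ) := by exact_mod_cast hN0
  set step : ℝ := 2 * M / N with hstepdef
  have hstep : 0 < step := by positivity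
  have hstepδ : step < δ := by
    rw [hstepdef, div_lt_iff₀ hNpos]
    calc 2 * M = (2 * M / δ) * δ := by field_simp
    _ < N * δ := by apply mul_lt_mul_of_pos_right hNgt hδ
    _ = δ * N := mul_comm _ _
  set s : ℕ → ℝ := fun i => -M + i * step with hsdef
  set G : ℕ → ℝ := fun i => g (s i) with hGdef
  have hNne : (N:ℝ) ≠ 0 := hNpos.ne'
  have hsN : s N = M := by
    show -M + N * step = M
    rw [hstepdef]; field_simp; ring
  have hsmem : ∀ i : ℕ, i ≤ N → s i ∈ Set.Icc (-M) M := by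
    intro i hi
    constructor
    · simp only [hsdef, le_add_iff_nonneg_right]; positivity
    · rw [← hsN, hsdef]
      simp only [add_le_add_iff_left]
      apply mul_le_mul_of_nonneg_right _ hstep.le
      exact_mod_cast hi
  -- the jumps are small
  have hjump : ∀ i : ℕ, i < N → |G (i+1) - G i| ≤ ε₁ := by
    intro i hi
    apply hunif _ (hsmem _ hi) _ (hsmem _ hi.le)
    have hd : s (i+1) - s i = step := by
      show (-M + (↑(i+1)) * step) - (-M + ↑i * step) = step
      push_cast; ring
    rw [Real.dist_eq, hd, abs_of_pos hstep]
    exact hstepδ.le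
  set α : ℝ := ε / (5 * (N + 1) * (ε₁ + 1)) with hαdef
  have hα : 0 < α := by positivity
  obtain ⟨T, hT1, hTtop, hTbot⟩ := sigma_tail σ ht hb α hα
  set lam : ℝ := T / step with hlamdef
  have hlam : 0 < lam := by positivity
  have hlamstep : lam * step = T := by rw [hlamdef]; field_simp
  set α' : ℝ := ε / (5 * (|g (s 0)| + 1)) with hα'def
  have hα' : 0 < α' := by positivity
  obtain ⟨T', hT'1, hT'top, _⟩ := sigma_tail σ ht hb α' hα'
  -- the network
  refine ⟨N + 1, Fin.cases (g (s 0)) (fun i : Fin N => G (i+1) - G i),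
    Fin.cases 0 (fun _ => lam), Fin.cases T' (fun i : Fin N => -(lam * s (i+1))), ?_⟩
  intro t htmem
  obtain ⟨htl, htr⟩ := htmem
  -- rewrite the network sum
  have hnet : ∑ j : Fin (N+1),
      (Fin.cases (g (s 0)) (fun i : Fin N => G (i+1) - G i) j : ℝ) *
        σ ((Fin.cases 0 (fun _ => lam) j : ℝ) * t + Fin.cases T' (fun i : Fin N => -(lam * s (i+1))) j)
      = g (s 0) * σ T' + ∑ i ∈ range N, (G (i+1) - G i) * σ (lam * t - lam * s (i+1)) := by
    rw [Fin.sum_univ_succ]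
    simp only [Fin.cases_zero, Fin.cases_succ, zero_mul, zero_add]
    rw [← Fin.sum_univ_eq_sum_range]
    simp only [← sub_eq_add_neg]
  rw [hnet]
  -- the bracketing index
  set j : ℕ := min ⌊(t + M)/step⌋₊ N with hjdef
  have hjN : j ≤ N := min_le_right _ _
  have htM0 : 0 ≤ (t + M) / step := div_nonneg (by linarith) hstep.le
  have hfloor_le : (⌊(t + M)/step⌋₊ : ℝ) ≤ (t + M)/step := Nat.floor_le htM0
  have hsj_le : s j ≤ t := by
    have hjle : (j:ℝ) ≤ (t + M)/step := by
      rcases min_cases ⌊(t + M)/step⌋₊ N with ⟨h1, h2⟩ | ⟨h1, h2⟩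
      · rw [hjdef, h1]; exact hfloor_le
      · rw [hjdef, h1]
        exact le_trans (by exact_mod_cast h2.le) hfloor_le
    have : (j:ℝ) * step ≤ t + M := (le_div_iff₀ hstep).mp hjle
    show -M + (j:ℝ) * step ≤ t
    linarith
  have ht_le : t ≤ s (j+1) := by
    show t ≤ -M + (↑(j+1)) * step
    rcases min_cases ⌊(t + M)/step⌋₊ N with ⟨h1, h2⟩ | ⟨h1, h2⟩
    · have hlt : (t + M)/step < (⌊(t + M)/step⌋₊ : ℝ) + 1 := Nat.lt_floor_add_one _
      have : t + M < ((⌊(t + M)/step⌋₊ : ℝ) + 1) * step := by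
        rw [← div_lt_iff₀ hstep]; exact hlt
      rw [hjdef, h1]
      push_cast
      linarith
    · rw [hjdef, h1]
      push_cast
      have hNs : -M + ((N:ℝ)) * step = M := hsN
      linarith [hstep.le]
  clear_value j
  have key : ∑ i ∈ range N, (G (i+1) - G i) * (if i + 1 ≤ j then (1:ℝ) else 0) = G j - G 0 := by
    have h1 : ∑ i ∈ range N, (G (i+1) - G i) * (if i + 1 ≤ j then (1:ℝ) else 0)
        = ∑ i ∈ (range N).filter (fun i => i + 1 ≤ j), (G (i+1) - G i) := by
      rw [Finset.sum_filter]
      apply Finset.sum_congr rfl; intro i _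
      by_cases h : i + 1 ≤ j <;> simp [h]
    have h2 : (range N).filter (fun i => i + 1 ≤ j) = range j := by
      ext a; simp only [Finset.mem_filter, Finset.mem_range]
      omega
    rw [h1, h2, Finset.sum_range_sub]
  have hdecomp : g t - (g (s 0) * σ T' + ∑ i ∈ range N, (G (i+1) - G i) * σ (lam * t - lam * s (i+1)))
      = (g t - G j)
        + (∑ i ∈ range N, (G (i+1) - G i) * ((if i + 1 ≤ j then (1:ℝ) else 0) - σ (lam * t - lam * s (i+1))))
        + G 0 * (1 - σ T') := by
    have hG0 : G 0 = g (s 0) := rfl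
    simp only [mul_sub]
    rw [Finset.sum_sub_distrib, key, hG0]
    ring
  -- bound (1)
  have h1 : |g t - G j| ≤ ε₁ := by
    have hd : dist t (s j) ≤ δ := by
      have hstep' : s (j+1) - s j = step := by
        show (-M + (↑(j+1)) * step) - (-M + ↑j * step) = step
        push_cast; ring
      rw [Real.dist_eq, abs_of_nonneg (by linarith)]
      have : t - s j ≤ step := by linarith
      linarith
    exact hunif t ⟨htl, htr⟩ (s j) (hsmem j hjN) hd
  -- bound each middle term
  have hterm : ∀ i ∈ range N,
      |(G (i+1) - G i) * ((if i + 1 ≤ j then (1:ℝ) else 0) - σ (lam * t - lam * s (i+1)))|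
        ≤ ε₁ * (if j ≤ i + 1 ∧ i ≤ j then 1 + C else α) := by
    intro i hi
    rw [abs_mul]
    apply mul_le_mul (hjump i (Finset.mem_range.mp hi)) ?_ (abs_nonneg _) hε₁.le
    by_cases hbad : j ≤ i + 1 ∧ i ≤ j
    · simp only [hbad, if_true]
      calc |(if i + 1 ≤ j then (1:ℝ) else 0) - σ (lam * t - lam * s (i+1))|
          ≤ |(if i + 1 ≤ j then (1:ℝ) else 0)| + |σ (lam * t - lam * s (i+1))| := abs_sub _ _
        _ ≤ 1 + C := by
            apply add_le_add _ (hC _)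
            by_cases h : i + 1 ≤ j <;> simp [h]
    · simp only [hbad, if_false]
      rcases lt_or_ge (i+1) j with hlt | hge
      · have hif : (if i + 1 ≤ j then (1:ℝ) else 0) = 1 := if_pos hlt.le
        rw [hif]
        have harg : T ≤ lam * t - lam * s (i+1) := by
          have hc1 : ((i:ℝ)+1) + 1 ≤ (j:ℝ) := by exact_mod_cast hlt
          have h1 : s (i+1) + step ≤ s j := by
            show -M + (↑(i+1)) * step + step ≤ -M + (j:ℝ) * step
            push_cast
            have := mul_le_mul_of_nonneg_right hc1 hstep.le
            linarith
          have h2 : step ≤ t - s (i+1) := by linarith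
          calc T = lam * step := hlamstep.symm
          _ ≤ lam * (t - s (i+1)) := mul_le_mul_of_nonneg_left h2 hlam.le
          _ = lam * t - lam * s (i+1) := by ring
        rw [abs_sub_comm]
        exact hTtop _ harg
      · have hif : (if i + 1 ≤ j then (1:ℝ) else 0) = 0 := if_neg (by omega)
        rw [hif]
        have hji : j + 2 ≤ i + 1 := by omega
        have harg : lam * t - lam * s (i+1) ≤ -T := by
          have hc1 : (j:ℝ) + 1 + 1 ≤ (i:ℝ) + 1 := by exact_mod_cast hji
          have h1 : s (j+1) + step ≤ s (i+1) := by
            show -M + (↑(j+1)) * step + step ≤ -M + (↑(i+1)) * step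
            push_cast
            have := mul_le_mul_of_nonneg_right hc1 hstep.le
            linarith
          have h2 : t + step ≤ s (i+1) := by linarith
          calc lam * t - lam * s (i+1) = lam * (t - s (i+1)) := by ring
          _ ≤ lam * (-step) := mul_le_mul_of_nonneg_left (by linarith) hlam.le
          _ = -(lam * step) := by ring
          _ = -T := by rw [hlamstep]
        rw [zero_sub, abs_neg]
        exact hTbot _ harg
  -- sum up the middle bound
  have hmid : |∑ i ∈ range N, (G (i+1) - G i) * ((if i + 1 ≤ j then (1:ℝ) else 0) - σ (lam * t - lam * s (i+1)))|
      ≤ ε₁ * (2 * (1 + C) + N * α) := by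
    calc |∑ i ∈ range N, (G (i+1) - G i) * ((if i + 1 ≤ j then (1:ℝ) else 0) - σ (lam * t - lam * s (i+1)))|
        ≤ ∑ i ∈ range N, |(G (i+1) - G i) * ((if i + 1 ≤ j then (1:ℝ) else 0) - σ (lam * t - lam * s (i+1)))| :=
          Finset.abs_sum_le_sum_abs _ _
      _ ≤ ∑ i ∈ range N, ε₁ * (if j ≤ i + 1 ∧ i ≤ j then 1 + C else α) := Finset.sum_le_sum hterm
      _ = ε₁ * ∑ i ∈ range N, (if j ≤ i + 1 ∧ i ≤ j then 1 + C else α) := by rw [Finset.mul_sum]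
      _ ≤ ε₁ * (2 * (1 + C) + N * α) := by
          apply mul_le_mul_of_nonneg_left _ hε₁.le
          calc ∑ i ∈ range N, (if j ≤ i + 1 ∧ i ≤ j then 1 + C else α)
              ≤ ∑ i ∈ range N, ((if j ≤ i + 1 ∧ i ≤ j then 1 + C else 0) + α) := by
                apply Finset.sum_le_sum; intro i _
                by_cases h : j ≤ i + 1 ∧ i ≤ j <;> simp [h] <;> linarith
            _ = (∑ i ∈ range N, (if j ≤ i + 1 ∧ i ≤ j then (1:ℝ) + C else 0)) + N * α := by
                rw [Finset.sum_add_distrib, Finset.sum_const, Finset.card_range, nsmul_eq_mul]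
            _ ≤ 2 * (1 + C) + N * α := by
                apply add_le_add_left
                have hite : ∑ i ∈ range N, (if j ≤ i + 1 ∧ i ≤ j then (1:ℝ) + C else 0)
                    = ∑ _i ∈ (range N).filter (fun i => j ≤ i + 1 ∧ i ≤ j), ((1:ℝ) + C) :=
                  (Finset.sum_filter _ _).symm
                rw [hite]
                have hsub : (range N).filter (fun i => j ≤ i + 1 ∧ i ≤ j) ⊆ {j - 1, j} := by
                  intro a ha
                  simp only [Finset.mem_filter, Finset.mem_range] at ha
                  simp only [Finset.mem_insert, Finset.mem_singleton]
                  omega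
                calc ∑ _i ∈ (range N).filter (fun i => j ≤ i + 1 ∧ i ≤ j), ((1:ℝ) + C)
                    ≤ ∑ _i ∈ ({j - 1, j} : Finset ℕ), ((1:ℝ) + C) :=
                      Finset.sum_le_sum_of_subset_of_nonneg hsub (fun _ _ _ => by linarith)
                  _ ≤ 2 * (1 + C) := by
                      rw [Finset.sum_const, nsmul_eq_mul]
                      have : (({j - 1, j} : Finset ℕ).card : ℝ) ≤ 2 := by
                        have := Finset.card_insert_le (j-1) ({j} : Finset ℕ)
                        simp only [Finset.card_singleton] at this
                        exact_mod_cast this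
                      exact mul_le_mul_of_nonneg_right this (by linarith)
  -- bound (3)
  have h3 : |G 0 * (1 - σ T')| ≤ ε / 5 := by
    rw [abs_mul, abs_sub_comm]
    have hb0 : |σ T' - 1| ≤ α' := hT'top T' le_rfl
    have hGnn : (0:ℝ) ≤ |G 0| := abs_nonneg _
    have hG0 : |G 0| = |g (s 0)| := rfl
    calc |G 0| * |σ T' - 1| ≤ |G 0| * α' := mul_le_mul_of_nonneg_left hb0 hGnn
      _ ≤ ε / 5 := by
          rw [hG0, hα'def]
          have hpos : (0:ℝ) < 5 * (|g (s 0)| + 1) := by positivity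
          rw [mul_div_assoc', div_le_div_iff₀ hpos (by norm_num : (0:ℝ) < 5)]
          linarith [mul_nonneg hε.le (abs_nonneg (g (s 0))), hε.le]
  -- final arithmetic
  have e1 : ε₁ ≤ ε / 20 := by
    rw [hε₁def]
    apply div_le_div_of_nonneg_left hε.le (by norm_num) (by linarith)
  have e2a : ε₁ * (2 * (1 + C)) = ε / 5 := by
    rw [hε₁def]; field_simp; ring
  have e2b : ε₁ * ((N:ℝ) * α) ≤ ε / 5 := by
    have hN1 : (0:ℝ) < (N:ℝ) + 1 := by positivity
    have hE1 : (0:ℝ) < ε₁ + 1 := by positivity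
    calc ε₁ * ((N:ℝ) * α) = ε * (ε₁ * N) / (5 * ((N:ℝ)+1) * (ε₁+1)) := by
          rw [hαdef]; field_simp
      _ ≤ ε / 5 := by
          rw [div_le_div_iff₀ (by positivity) (by norm_num : (0:ℝ) < 5)]
          linarith [mul_nonneg hε.le hε₁.le, mul_nonneg hε.le hNpos.le, hε.le]
  calc |g t - (g (s 0) * σ T' + ∑ i ∈ range N, (G (i+1) - G i) * σ (lam * t - lam * s (i+1)))|
      = |(g t - G j)
        + (∑ i ∈ range N, (G (i+1) - G i) * ((if i + 1 ≤ j then (1:ℝ) else 0) - σ (lam * t - lam * s (i+1))))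
        + G 0 * (1 - σ T')| := by rw [hdecomp]
    _ ≤ |(g t - G j)
        + (∑ i ∈ range N, (G (i+1) - G i) * ((if i + 1 ≤ j then (1:ℝ) else 0) - σ (lam * t - lam * s (i+1))))|
        + |G 0 * (1 - σ T')| := abs_add_le _ _
    _ ≤ |g t - G j|
        + |∑ i ∈ range N, (G (i+1) - G i) * ((if i + 1 ≤ j then (1:ℝ) else 0) - σ (lam * t - lam * s (i+1)))|
        + |G 0 * (1 - σ T')| := by
          apply add_le_add_left (abs_add_le _ _)
    _ ≤ ε₁ + ε₁ * (2 * (1 + C) + (N:ℝ) * α) + ε / 5 := by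
          apply add_le_add (add_le_add h1 hmid) h3
    _ < ε := by linarith [e1, e2a, e2b, hε]

/-- `f : K → ℝ` is uniformly approximable by one-hidden-layer `σ`-networks. -/
def NetP {n : ℕ} (σ : ℝ → ℝ) (K : Set (Fin n → ℝ)) (f : K → ℝ) : Prop :=
  ∀ ε : ℝ, 0 < ε → ∃ (k : ℕ) (W : Fin k → ℝ) (θ : Fin k → Fin n → ℝ) (b : Fin k → ℝ),
    ∀ x : K, |f x - ∑ i, W i * σ (θ i ⬝ᵥ (x : Fin n → ℝ) + b i)| < ε

lemma NetP_zero {n : ℕ} (σ : ℝ → ℝ) (K : Set (Fin n → ℝ)) : NetP σ K 0 := by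
  intro ε hε
  exact ⟨0, Fin.elim0, Fin.elim0, Fin.elim0, fun x => by simpa using hε⟩

lemma NetP_add {n : ℕ} {σ : ℝ → ℝ} {K : Set (Fin n → ℝ)} {f g : K → ℝ}
    (hf : NetP σ K f) (hg : NetP σ K g) : NetP σ K (f + g) := by
  intro ε hε
  obtain ⟨k₁, W₁, θ₁, b₁, h₁⟩ := hf (ε/2) (by linarith)
  obtain ⟨k₂, W₂, θ₂, b₂, h₂⟩ := hg (ε/2) (by linarith)
  refine ⟨k₁ + k₂, Fin.append W₁ W₂, Fin.append θ₁ θ₂, Fin.append b₁ b₂, fun x => ?_⟩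
  have hsum : ∑ i : Fin (k₁ + k₂),
      Fin.append W₁ W₂ i * σ (Fin.append θ₁ θ₂ i ⬝ᵥ (x : Fin n → ℝ) + Fin.append b₁ b₂ i)
      = (∑ i : Fin k₁, W₁ i * σ (θ₁ i ⬝ᵥ (x : Fin n → ℝ) + b₁ i))
        + ∑ i : Fin k₂, W₂ i * σ (θ₂ i ⬝ᵥ (x : Fin n → ℝ) + b₂ i) := by
    rw [Fin.sum_univ_add]
    simp [Fin.append_left, Fin.append_right]
  rw [hsum]
  have h1 := h₁ x
  have h2 := h₂ x
  have : (f + g) x - ((∑ i : Fin k₁, W₁ i * σ (θ₁ i ⬝ᵥ (x : Fin n → ℝ) + b₁ i))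
        + ∑ i : Fin k₂, W₂ i * σ (θ₂ i ⬝ᵥ (x : Fin n → ℝ) + b₂ i))
      = (f x - ∑ i : Fin k₁, W₁ i * σ (θ₁ i ⬝ᵥ (x : Fin n → ℝ) + b₁ i))
        + (g x - ∑ i : Fin k₂, W₂ i * σ (θ₂ i ⬝ᵥ (x : Fin n → ℝ) + b₂ i)) := by
    simp [Pi.add_apply]; ring
  rw [this]
  calc |_ + _| ≤ _ + _ := abs_add_le _ _
  _ < ε/2 + ε/2 := add_lt_add h1 h2
  _ = ε := by ring

lemma NetP_smul {n : ℕ} {σ : ℝ → ℝ} {K : Set (Fin n → ℝ)} {f : K → ℝ}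
    (r : ℝ) (hf : NetP σ K f) : NetP σ K (r • f) := by
  intro ε hε
  have hr1 : 0 < |r| + 1 := by positivity
  obtain ⟨k, W, θ, b, h⟩ := hf (ε / (|r| + 1)) (by positivity)
  refine ⟨k, fun i => r * W i, θ, b, fun x => ?_⟩
  have hsum : ∑ i : Fin k, (r * W i) * σ (θ i ⬝ᵥ (x : Fin n → ℝ) + b i)
      = r * ∑ i : Fin k, W i * σ (θ i ⬝ᵥ (x : Fin n → ℝ) + b i) := by
    rw [Finset.mul_sum]; apply Finset.sum_congr rfl; intro i _; ring
  rw [hsum]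
  have : (r • f) x - r * ∑ i : Fin k, W i * σ (θ i ⬝ᵥ (x : Fin n → ℝ) + b i)
      = r * (f x - ∑ i : Fin k, W i * σ (θ i ⬝ᵥ (x : Fin n → ℝ) + b i)) := by
    simp [Pi.smul_apply]; ring
  rw [this, abs_mul]
  calc |r| * |f x - ∑ i : Fin k, W i * σ (θ i ⬝ᵥ (x : Fin n → ℝ) + b i)|
      ≤ |r| * (ε / (|r| + 1)) := mul_le_mul_of_nonneg_left (h x).le (abs_nonneg r)
  _ < ε := by
      rw [mul_div_assoc', div_lt_iff₀ hr1]
      nlinarith [abs_nonneg r, hε]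

lemma NetP_exp {n : ℕ} (σ : ℝ → ℝ) (hc : Continuous σ) (ht : Tendsto σ atTop (nhds 1))
    (hb : Tendsto σ atBot (nhds 0)) (K : Set (Fin n → ℝ)) (hK : IsCompact K)
    (w : Fin n → ℝ) : NetP σ K (fun x => Real.exp (w ⬝ᵥ (x : Fin n → ℝ))) := by
  intro ε hε
  have hcw : ContinuousOn (fun x : Fin n → ℝ => w ⬝ᵥ x) K := by
    apply Continuous.continuousOn
    show Continuous fun x : Fin n → ℝ => ∑ i : Fin n, w i * x i
    exact continuous_finset_sum _ (fun i _ => continuous_const.mul (continuous_apply i))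
  obtain ⟨M₀, hM₀⟩ := hK.exists_bound_of_continuousOn hcw
  set M : ℝ := max M₀ 1 with hMdef
  have hM : 1 ≤ M := le_max_right _ _
  obtain ⟨k, wc, lam, c, hnet⟩ := oneD σ hc ht hb Real.exp Real.continuous_exp M hM ε hε
  refine ⟨k, wc, fun i => lam i • w, c, fun x => ?_⟩
  have harg : ∀ i : Fin k, (lam i • w) ⬝ᵥ (x : Fin n → ℝ) = lam i * (w ⬝ᵥ (x : Fin n → ℝ)) := by
    intro i; rw [smul_dotProduct, smul_eq_mul]
  simp only [harg]
  apply hnet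
  have := hM₀ (x : Fin n → ℝ) x.2
  rw [Real.norm_eq_abs] at this
  have habs : |w ⬝ᵥ (x : Fin n → ℝ)| ≤ M := this.trans (le_max_left _ _)
  exact abs_le.mp habs

end CybenkoAux

/-- Cybenko's universal approximation theorem: single-hidden-layer networks with
a continuous sigmoidal activation `σ` (`σ → 1` at `+∞`, `σ → 0` at `−∞`) are
dense in `C(K)` for compact `K ⊂ ℝⁿ`. -/
theorem universal_approximation_sigmoidal {n : ℕ}
    (σ : ℝ → ℝ) (hσ_cont : Continuous σ)
    (hσ_top : Tendsto σ atTop (nhds 1)) (hσ_bot : Tendsto σ atBot (nhds 0))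
    (K : Set (Fin n → ℝ)) (hK : IsCompact K)
    (Δ : (Fin n → ℝ) → ℝ) (hΔ : ContinuousOn Δ K)
    (ε : ℝ) (hε : 0 < ε) :
    ∃ (k : ℕ) (W : Fin k → ℝ) (θ : Fin k → Fin n → ℝ) (b : Fin k → ℝ),
      ∀ x ∈ K, |Δ x - ∑ i, W i * σ (θ i ⬝ᵥ x + b i)| < ε := by
  haveI : CompactSpace K := isCompact_iff_compactSpace.mp hK
  -- the exponential ridge functions
  have hcw : ∀ w : Fin n → ℝ, Continuous fun x : K => Real.exp (w ⬝ᵥ (x : Fin n → ℝ)) := by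
    intro w
    apply Real.continuous_exp.comp
    show Continuous fun x : K => ∑ i : Fin n, w i * (x : Fin n → ℝ) i
    exact continuous_finset_sum _
      (fun i _ => continuous_const.mul ((continuous_apply i).comp continuous_subtype_val))
  let e : (Fin n → ℝ) → C(K, ℝ) := fun w => ⟨fun x => Real.exp (w ⬝ᵥ (x : Fin n → ℝ)), hcw w⟩
  -- they form a submonoid
  let MS : Submonoid C(K, ℝ) :=
    { carrier := Set.range e
      one_mem' := ⟨0, by ext x; simp [e, zero_dotProduct]⟩
      mul_mem' := by
        rintro _ _ ⟨w, rfl⟩ ⟨v, rfl⟩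
        exact ⟨w + v, by ext x; simp [e, add_dotProduct, Real.exp_add]⟩ }
  -- the subalgebra they generate separates points
  let A : Subalgebra ℝ C(K, ℝ) := Algebra.adjoin ℝ (Set.range e)
  have hsep : A.SeparatesPoints := by
    intro x y hxy
    have hval : (x : Fin n → ℝ) ≠ (y : Fin n → ℝ) := fun h => hxy (Subtype.ext h)
    set w : Fin n → ℝ := (x : Fin n → ℝ) - (y : Fin n → ℝ) with hwdef
    have hw : w ≠ 0 := sub_ne_zero_of_ne hval
    refine ⟨e w, ⟨e w, Algebra.subset_adjoin ⟨w, rfl⟩, rfl⟩, ?_⟩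
    show Real.exp (w ⬝ᵥ (x : Fin n → ℝ)) ≠ Real.exp (w ⬝ᵥ (y : Fin n → ℝ))
    rw [Ne, Real.exp_eq_exp]
    intro heq
    have h4 : w ⬝ᵥ w = 0 := by
      have h5 : w ⬝ᵥ ((x : Fin n → ℝ) - (y : Fin n → ℝ)) = 0 := by
        rw [dotProduct_sub, heq, sub_self]
      rwa [← hwdef] at h5
    exact hw (dotProduct_self_eq_zero.mp h4)
  -- Stone–Weierstrass
  let Δc : C(K, ℝ) := ⟨K.restrict Δ, hΔ.restrict⟩
  obtain ⟨⟨f, hfA⟩, hfclose⟩ :=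
    ContinuousMap.exists_mem_subalgebra_near_continuousMap_of_separatesPoints A hsep Δc
      (ε/2) (by linarith)
  have hfpt : ∀ x : K, |f x - Δ x| < ε/2 := by
    intro x
    have h1 : ‖(f - Δc) x‖ ≤ ‖f - Δc‖ := ContinuousMap.norm_coe_le_norm _ x
    have h2 : ‖(f - Δc) x‖ = |f x - Δ x| := by
      simp [Δc, Real.norm_eq_abs]; rfl
    rw [h2] at h1
    exact lt_of_le_of_lt h1 hfclose
  -- every element of the subalgebra is NetP-approximable
  have hspan : f ∈ Submodule.span ℝ (Set.range e) := by
    have h1 : Subalgebra.toSubmodule A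
        = Submodule.span ℝ ((Submonoid.closure (Set.range e) : Submonoid C(K, ℝ)) : Set C(K, ℝ)) :=
      Algebra.adjoin_eq_span ℝ _
    have h2 : Submonoid.closure (Set.range e) = MS := Submonoid.closure_eq MS
    have h3 : f ∈ Subalgebra.toSubmodule A := hfA
    rw [h1, h2] at h3
    exact h3
  have hnetf : NetP σ K ⇑f := by
    refine Submodule.span_induction (p := fun (g : C(K, ℝ)) (_ : g ∈ Submodule.span ℝ (Set.range e)) => NetP σ K ⇑g) ?_ ?_ ?_ ?_ hspan
    · rintro _ ⟨w, rfl⟩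
      exact NetP_exp σ hσ_cont hσ_top hσ_bot K hK w
    · simpa using NetP_zero σ K
    · intro a b _ _ ha hb
      have : ⇑(a + b) = ⇑a + ⇑b := rfl
      rw [this]
      exact NetP_add ha hb
    · intro r a _ ha
      have : ⇑(r • a) = r • ⇑a := rfl
      rw [this]
      exact NetP_smul r ha
  obtain ⟨k, W, θ, b, hnet⟩ := hnetf (ε/2) (by linarith)
  refine ⟨k, W, θ, b, fun x hx => ?_⟩
  have h1 := hnet ⟨x, hx⟩
  have h2 := hfpt ⟨x, hx⟩
  calc |Δ x - ∑ i, W i * σ (θ i ⬝ᵥ x + b i)|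
      = |(Δ x - f ⟨x, hx⟩) + (f ⟨x, hx⟩ - ∑ i, W i * σ (θ i ⬝ᵥ x + b i))| := by ring_nf
    _ ≤ |Δ x - f ⟨x, hx⟩| + |f ⟨x, hx⟩ - ∑ i, W i * σ (θ i ⬝ᵥ x + b i)| := abs_add_le _ _
    _ < ε/2 + ε/2 := by
        apply add_lt_add _ h1
        rw [abs_sub_comm]
        exact h2
    _ = ε := by ring
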